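/- Let H be a Hilbert space, {T_ω}_{ω∈Ω} an integral operator frame with frame operator S and bounds A, B. Then the family {Λ_ω}_{ω∈Ω} defined by Λ_ω = T_ω ∘ S⁻¹ is also an integral operator frame, and it is a dual of {T_ω}: for every x ∈ H, x = ∫_Ω T_ω* Λ_ω x dμ(ω). -/
import Mathlib


open MeasureTheory

/-- the canonical dual family `Λ_ω = T_ω ∘ S⁻¹` of an integral operator
frame is itself an integral operator frame, and it is a dual of `{T_ω}`:
`x = ∫ T_ω* Λ_ω x dμ(ω)` for all `x`. -/
theorem stmt_6
    {H : Type*} [NormedAddCommGroup H] [InnerProductSpace ℂ H] [CompleteSpace H]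
    {Ω : Type*} [MeasurableSpace Ω] (μ : Measure Ω)
    (T : Ω → H →L[ℂ] H) (A B : ℝ) (hA : 0 < A) (hAB : A ≤ B)
    (h_int : ∀ x : H, Integrable (fun ω => ‖T ω x‖ ^ 2) μ)
    (h_frame : ∀ x : H,
      A * ‖x‖ ^ 2 ≤ ∫ ω, ‖T ω x‖ ^ 2 ∂μ ∧ (∫ ω, ‖T ω x‖ ^ 2 ∂μ) ≤ B * ‖x‖ ^ 2)
    (S Sinv : H →L[ℂ] H)
    (hS_int : ∀ x : H, Integrable (fun ω => (T ω).adjoint (T ω x)) μ)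
    (hS : ∀ x : H, S x = ∫ ω, (T ω).adjoint (T ω x) ∂μ)
    (hSinv₁ : ∀ x : H, Sinv (S x) = x) (hSinv₂ : ∀ x : H, S (Sinv x) = x) :
    (∃ A' B' : ℝ, 0 < A' ∧ 0 < B' ∧ ∀ x : H,
      A' * ‖x‖ ^ 2 ≤ ∫ ω, ‖(T ω).comp Sinv x‖ ^ 2 ∂μ ∧
      (∫ ω, ‖(T ω).comp Sinv x‖ ^ 2 ∂μ) ≤ B' * ‖x‖ ^ 2) ∧
    (∀ x : H, x = ∫ ω, (T ω).adjoint ((T ω).comp Sinv x) ∂μ) := by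
  have hB : 0 < B := lt_of_lt_of_le hA hAB
  set C := max ‖S‖ 1 with hC
  set D := max ‖Sinv‖ 1 with hD
  have hC1 : (1 : ℝ) ≤ C := le_max_right _ _
  have hD1 : (1 : ℝ) ≤ D := le_max_right _ _
  have hC0 : 0 < C := lt_of_lt_of_le one_pos hC1
  have hD0 : 0 < D := lt_of_lt_of_le one_pos hD1
  constructor
  · refine ⟨A / C ^ 2, B * D ^ 2, by positivity, by positivity, fun x => ?_⟩
    have h1 := (h_frame (Sinv x)).1
    have h2 := (h_frame (Sinv x)).2
    have hx : ‖x‖ ≤ C * ‖Sinv x‖ := by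
      calc ‖x‖ = ‖S (Sinv x)‖ := by rw [hSinv₂]
        _ ≤ ‖S‖ * ‖Sinv x‖ := S.le_opNorm _
        _ ≤ C * ‖Sinv x‖ := by
            gcongr; exact le_max_left _ _
    have hSx : ‖Sinv x‖ ≤ D * ‖x‖ :=
      le_trans (Sinv.le_opNorm x) (by gcongr; exact le_max_left _ _)
    have hx2 : ‖x‖ ^ 2 ≤ C ^ 2 * ‖Sinv x‖ ^ 2 := by
      calc ‖x‖ ^ 2 ≤ (C * ‖Sinv x‖) ^ 2 := pow_le_pow_left₀ (norm_nonneg x) hx 2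
        _ = C ^ 2 * ‖Sinv x‖ ^ 2 := by ring
    have hSx2 : ‖Sinv x‖ ^ 2 ≤ D ^ 2 * ‖x‖ ^ 2 := by
      calc ‖Sinv x‖ ^ 2 ≤ (D * ‖x‖) ^ 2 := pow_le_pow_left₀ (norm_nonneg _) hSx 2
        _ = D ^ 2 * ‖x‖ ^ 2 := by ring
    constructor
    · simp only [ContinuousLinearMap.comp_apply]
      have key : A / C ^ 2 * ‖x‖ ^ 2 ≤ A * ‖Sinv x‖ ^ 2 := by
        rw [div_mul_eq_mul_div, div_le_iff₀ (by positivity)]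
        nlinarith [mul_le_mul_of_nonneg_left hx2 hA.le]
      linarith
    · simp only [ContinuousLinearMap.comp_apply]
      have key : B * ‖Sinv x‖ ^ 2 ≤ B * D ^ 2 * ‖x‖ ^ 2 := by
        nlinarith [mul_le_mul_of_nonneg_left hSx2 hB.le]
      linarith
  · intro x
    simp only [ContinuousLinearMap.comp_apply]
    rw [← hS (Sinv x), hSinv₂]
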